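/- arXiv:2307.01770 — 12 statements merged into one kernel-verified Lean document; each statement's English description precedes it below -/
import Mathlib

section
/- Fix n ≥ 1, d ≥ 1, a unit vector θ ∈ ℝ^d, and point configurations x, y, z : Fin n → ℝ^d. For all θ-sorting permutations σ for x, τ for y, and π for z, the square roots of the SWGG values satisfy the triangle inequality: √(SWGG(x,z,θ;σ,π)) ≤ √(SWGG(x,y,θ;σ,τ)) + √(SWGG(y,z,θ;τ,π)). -/
open scoped RealInnerProductSpace

/-- The SWGG value associated to configurations `x, y` and permutations `σ, τ`:
`(1/n) Σ_i ‖x_{σ(i)} − y_{τ(i)}‖²`. -/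
noncomputable def SWGG {n d : ℕ} (x y : Fin n → EuclideanSpace ℝ (Fin d))
    (σ τ : Equiv.Perm (Fin n)) : ℝ :=
  (n : ℝ)⁻¹ * ∑ i, ‖x (σ i) - y (τ i)‖ ^ 2

/-- A permutation `σ` is θ-sorting for `x` if `i ↦ ⟨x_{σ(i)}, θ⟩` is nondecreasing. -/
def IsSorting {n d : ℕ} (θ : EuclideanSpace ℝ (Fin d))
    (x : Fin n → EuclideanSpace ℝ (Fin d)) (σ : Equiv.Perm (Fin n)) : Prop :=
  Monotone fun i => ⟪x (σ i), θ⟫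

/-! Up to the factor `n^{-1/2}`, `√SWGG x y σ τ` is the `ℓ²`-distance between the reordered
configurations `x ∘ σ` and `y ∘ τ` in `(ℝ^d)^n`, so the inequality is the triangle inequality
of that norm (Minkowski's inequality). -/

theorem sqrt_sum_norm_sub_sq_le_add {ι E : Type*} [Fintype ι] [SeminormedAddCommGroup E]
    (a b c : ι → E) :
    √(∑ i, ‖a i - c i‖ ^ 2) ≤ √(∑ i, ‖a i - b i‖ ^ 2) + √(∑ i, ‖b i - c i‖ ^ 2) := by
  simpa only [PiLp.norm_eq_of_L2, ← WithLp.toLp_sub, PiLp.toLp_apply, Pi.sub_apply] using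
    norm_sub_le_norm_sub_add_norm_sub (WithLp.toLp 2 a) (WithLp.toLp 2 b) (WithLp.toLp 2 c)

theorem sqrt_SWGG_triangle_general {n d : ℕ}
    (x y z : Fin n → EuclideanSpace ℝ (Fin d))
    (σ τ π : Equiv.Perm (Fin n)) :
    Real.sqrt (SWGG x z σ π) ≤ Real.sqrt (SWGG x y σ τ) + Real.sqrt (SWGG y z τ π) := by
  simp only [SWGG, Real.sqrt_mul (inv_nonneg.mpr n.cast_nonneg), ← mul_add]
  exact mul_le_mul_of_nonneg_left
    (sqrt_sum_norm_sub_sq_le_add (x ∘ σ) (y ∘ τ) (z ∘ π)) (Real.sqrt_nonneg _)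

/-- Triangle inequality for `√SWGG` along a fixed direction `θ`. -/
theorem sqrt_SWGG_triangle {n d : ℕ} (hn : 1 ≤ n) (hd : 1 ≤ d)
    (θ : EuclideanSpace ℝ (Fin d)) (hθ : ‖θ‖ = 1)
    (x y z : Fin n → EuclideanSpace ℝ (Fin d))
    (σ τ π : Equiv.Perm (Fin n))
    (hσ : IsSorting θ x σ) (hτ : IsSorting θ y τ) (hπ : IsSorting θ z π) :
    Real.sqrt (SWGG x z σ π) ≤ Real.sqrt (SWGG x y σ τ) + Real.sqrt (SWGG y z τ π) :=
  sqrt_SWGG_triangle_general x y z σ τ π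
end

section
/- Fix n ≥ 1, d ≥ 1, a unit vector θ ∈ ℝ^d, and configurations x, y : Fin n → ℝ^d such that the projections ⟨x_i, θ⟩, 1 ≤ i ≤ n, are pairwise distinct and the projections ⟨y_i, θ⟩, 1 ≤ i ≤ n, are pairwise distinct. Let σ, τ be θ-sorting permutations for x and y respectively. Then SWGG(x,y,θ;σ,τ) = 0 if and only if there exists a permutation ρ of {1,…,n} with y_{ρ(i)} = x_i for all i (i.e. the uniform empirical measures of x and y coincide). -/
open scoped RealInnerProductSpace

/-- Squared 2-Wasserstein distance between the uniform empirical measures of `x` and `y`: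
`(1/n) · min_ρ Σ_i ‖x_i − y_{ρ(i)}‖²`. -/
noncomputable def Wsq {n d : ℕ} (x y : Fin n → EuclideanSpace ℝ (Fin d)) : ℝ :=
  (n : ℝ)⁻¹ * ⨅ ρ : Equiv.Perm (Fin n), ∑ i, ‖x i - y (ρ i)‖ ^ 2

/-- `min-SWGG`: the infimum of `SWGG x y θ σ τ` over unit vectors `θ` and
θ-sorting permutations `σ` for `x`, `τ` for `y`. -/
noncomputable def minSWGG {n d : ℕ} (x y : Fin n → EuclideanSpace ℝ (Fin d)) : ℝ :=
  sInf { r : ℝ | ∃ θ : EuclideanSpace ℝ (Fin d), ∃ σ τ : Equiv.Perm (Fin n),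
    ‖θ‖ = 1 ∧ IsSorting θ x σ ∧ IsSorting θ y τ ∧ r = SWGG x y σ τ }

/-- For distinct projections, `SWGG = 0` iff the two empirical point sets coincide
(up to a permutation matching `y` to `x`). -/
theorem SWGG_eq_zero_iff {n d : ℕ} (hn : 1 ≤ n) (hd : 1 ≤ d)
    (θ : EuclideanSpace ℝ (Fin d)) (hθ : ‖θ‖ = 1)
    (x y : Fin n → EuclideanSpace ℝ (Fin d))
    (hx : Function.Injective fun i => ⟪x i, θ⟫)
    (hy : Function.Injective fun i => ⟪y i, θ⟫)
    (σ τ : Equiv.Perm (Fin n))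
    (hσ : IsSorting θ x σ) (hτ : IsSorting θ y τ) :
    SWGG x y σ τ = 0 ↔ ∃ ρ : Equiv.Perm (Fin n), ∀ i, y (ρ i) = x i := by
  have hxσ : StrictMono fun i => ⟪x (σ i), θ⟫ :=
    hσ.strictMono_of_injective (hx.comp σ.injective)
  have hyτ : StrictMono fun i => ⟪y (τ i), θ⟫ :=
    hτ.strictMono_of_injective (hy.comp τ.injective)
  constructor
  · intro h
    have hn0 : (n : ℝ)⁻¹ ≠ 0 := by
      have : (0 : ℝ) < n := by exact_mod_cast hn
      positivity
    have hsum : ∑ i, ‖x (σ i) - y (τ i)‖ ^ 2 = 0 := by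
      rcases mul_eq_zero.mp h with h' | h'
      · exact absurd h' hn0
      · exact h'
    have hterm : ∀ i ∈ Finset.univ, ‖x (σ i) - y (τ i)‖ ^ 2 = 0 :=
      (Finset.sum_eq_zero_iff_of_nonneg (fun i _ => by positivity)).mp hsum
    have key : ∀ i, x (σ i) = y (τ i) := by
      intro i
      have := hterm i (Finset.mem_univ i)
      have hnorm : ‖x (σ i) - y (τ i)‖ = 0 := by
        nlinarith [norm_nonneg (x (σ i) - y (τ i))]
      have := norm_eq_zero.mp hnorm
      exact sub_eq_zero.mp this
    refine ⟨σ.symm.trans τ, fun i => ?_⟩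
    have := key (σ.symm i)
    simpa using this.symm
  · rintro ⟨ρ, hρ⟩
    set π : Equiv.Perm (Fin n) := (σ.trans ρ).trans τ.symm with hπdef
    have hπf : ∀ i, ⟪y (τ (π i)), θ⟫ = ⟪x (σ i), θ⟫ := by
      intro i
      have : τ (π i) = ρ (σ i) := by simp [hπdef]
      rw [this, hρ]
    have hπ : StrictMono (π : Fin n → Fin n) := by
      intro a b hab
      have h1 : ⟪x (σ a), θ⟫ < ⟪x (σ b), θ⟫ := hxσ hab
      rw [← hπf a, ← hπf b] at h1
      exact hyτ.lt_iff_lt.mp h1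
    have hπsymm : StrictMono (π.symm : Fin n → Fin n) := by
      intro a b hab
      have := hπ.lt_iff_lt (a := π.symm a) (b := π.symm b)
      simp only [Equiv.apply_symm_apply] at this
      exact this.mp hab
    have hid : ∀ i, π i = i := by
      intro i
      have hwf : WellFoundedLT (Fin n) := Finite.to_wellFoundedLT
      have h1 : i ≤ π i := hπ.le_apply
      have h2 : π i ≤ π.symm (π i) := hπsymm.le_apply
      rw [Equiv.symm_apply_apply] at h2
      exact le_antisymm h2 h1
    have key : ∀ i, x (σ i) = y (τ i) := by
      intro i
      have h1 : τ (π i) = ρ (σ i) := by simp [hπdef]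
      rw [hid i] at h1
      rw [h1, hρ]
    unfold SWGG
    rw [Finset.sum_eq_zero (fun i _ => by rw [key i, sub_self]; simp), mul_zero]
end

section
/- Fix n ≥ 1, d ≥ 2 and configurations x, y : Fin n → ℝ^d. Let ω be the uniform probability measure on the unit sphere S^{d−1} ⊂ ℝ^d, and suppose that for each unit vector θ one chooses θ-sorting permutations σ_θ for x and τ_θ for y in such a way that θ ↦ SWGG(x,y,θ;σ_θ,τ_θ) is measurable. Then the squared Wasserstein distance is bounded above by the projected Wasserstein distance: W²(x,y) ≤ ∫_{S^{d−1}} SWGG(x,y,θ;σ_θ,τ_θ) dω(θ). -/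
/-!
For any permutations `σ, τ`, the value `SWGG x y σ τ` is the cost of the particular matching
`τ σ⁻¹`, so it dominates `W²(x, y)` pointwise in `θ`.
Averaging this bound against the uniform probability measure on the sphere gives the claim,
the integrand being bounded since it takes finitely many values.
-/

open scoped RealInnerProductSpace

open MeasureTheory

/-- The uniform probability measure on the unit sphere of `ℝ^d`: the normalization of the
surface measure obtained from the Lebesgue (Haar) measure on `ℝ^d`. -/
noncomputable def uniformSphere (d : ℕ) :
    Measure (Metric.sphere (0 : EuclideanSpace ℝ (Fin d)) 1) :=
  ((volume : Measure (EuclideanSpace ℝ (Fin d))).toSphere Set.univ)⁻¹ •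
    (volume : Measure (EuclideanSpace ℝ (Fin d))).toSphere

theorem Wsq_le_SWGG {n d : ℕ} (x y : Fin n → EuclideanSpace ℝ (Fin d))
    (σ τ : Equiv.Perm (Fin n)) : Wsq x y ≤ SWGG x y σ τ := by
  have reindex : ∑ i, ‖x (σ i) - y (τ i)‖ ^ 2 = ∑ i, ‖x i - y ((τ * σ⁻¹) i)‖ ^ 2 := by
    rw [← Equiv.sum_comp σ fun i => ‖x i - y ((τ * σ⁻¹) i)‖ ^ 2]
    simp
  rw [Wsq, SWGG, reindex]
  gcongr
  exact ciInf_le (Finite.bddBelow_range _) (τ * σ⁻¹)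

theorem isProbabilityMeasure_uniformSphere {d : ℕ} (hd : d ≠ 0) :
    IsProbabilityMeasure (uniformSphere d) := by
  have hpos : (volume : Measure (EuclideanSpace ℝ (Fin d))).toSphere Set.univ ≠ 0 := by
    rw [Measure.toSphere_apply_univ, finrank_euclideanSpace_fin]
    exact mul_ne_zero (by exact_mod_cast hd) (Metric.measure_ball_pos _ _ one_pos).ne'
  constructor
  rw [uniformSphere, Measure.smul_apply, smul_eq_mul]
  exact ENNReal.inv_mul_cancel hpos (measure_ne_top _ _)

theorem wsq_le_PWD_general {n d : ℕ} (hd : 2 ≤ d)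
    (x y : Fin n → EuclideanSpace ℝ (Fin d))
    (σ τ : Metric.sphere (0 : EuclideanSpace ℝ (Fin d)) 1 → Equiv.Perm (Fin n))
    (hmeas : Measurable fun θ : Metric.sphere (0 : EuclideanSpace ℝ (Fin d)) 1 =>
      SWGG x y (σ θ) (τ θ)) :
    Wsq x y ≤ ∫ θ, SWGG x y (σ θ) (τ θ) ∂(uniformSphere d) := by
  have := isProbabilityMeasure_uniformSphere (d := d) (by omega)
  obtain ⟨C, hC⟩ := Finite.exists_le fun p : Equiv.Perm (Fin n) × Equiv.Perm (Fin n) =>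
    ‖SWGG x y p.1 p.2‖
  have hint : Integrable (fun θ => SWGG x y (σ θ) (τ θ)) (uniformSphere d) :=
    .of_bound hmeas.aestronglyMeasurable C (ae_of_all _ fun θ => hC (σ θ, τ θ))
  calc Wsq x y = ∫ _, Wsq x y ∂(uniformSphere d) := by simp
    _ ≤ ∫ θ, SWGG x y (σ θ) (τ θ) ∂(uniformSphere d) :=
      integral_mono (integrable_const _) hint fun θ => Wsq_le_SWGG x y (σ θ) (τ θ)

/-- The squared Wasserstein distance is bounded above by the projected Wasserstein distance,
i.e. the average of `SWGG` over directions `θ` drawn uniformly on the unit sphere. -/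
theorem wsq_le_PWD {n d : ℕ} (hn : 1 ≤ n) (hd : 2 ≤ d)
    (x y : Fin n → EuclideanSpace ℝ (Fin d))
    (σ τ : Metric.sphere (0 : EuclideanSpace ℝ (Fin d)) 1 → Equiv.Perm (Fin n))
    (hσ : ∀ θ : Metric.sphere (0 : EuclideanSpace ℝ (Fin d)) 1,
      IsSorting (θ : EuclideanSpace ℝ (Fin d)) x (σ θ))
    (hτ : ∀ θ : Metric.sphere (0 : EuclideanSpace ℝ (Fin d)) 1,
      IsSorting (θ : EuclideanSpace ℝ (Fin d)) y (τ θ))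
    (hmeas : Measurable fun θ : Metric.sphere (0 : EuclideanSpace ℝ (Fin d)) 1 =>
      SWGG x y (σ θ) (τ θ)) :
    Wsq x y ≤ ∫ θ, SWGG x y (σ θ) (τ θ) ∂(uniformSphere d) :=
  wsq_le_PWD_general hd x y σ τ hmeas
end

section
/- Fix n ≥ 1, d ≥ 1 and configurations x, y : Fin n → ℝ^d such that the 2n points x_1,…,x_n, y_1,…,y_n taken together are affinely independent (in particular d ≥ 2n−1). Then there exist a unit vector θ ∈ ℝ^d and θ-sorting permutations σ for x and τ for y with SWGG(x,y,θ;σ,τ) = W²(x,y); consequently the infimum min-SWGG(x,y) of SWGG(x,y,θ';σ',τ') over all unit vectors θ' and θ'-sorting permutations σ', τ' equals W²(x,y). -/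
open scoped RealInnerProductSpace

/-!
Let `ρ` be an optimal matching of `x` with `y`. Affine independence of the `2n` points means
that the values `⟪x i, θ⟫`, `⟪y j, θ⟫` can be prescribed arbitrarily up to a common additive
constant. Prescribing `⟪x i, θ⟫ = i` and `⟪y (ρ i), θ⟫ = i + 1` makes the identity `θ`-sorting
for `x` and `ρ` `θ`-sorting for `y`, so SWGG along `θ` is the cost of `ρ`, namely `W²(x, y)`.
Since no pair of permutations beats the optimal matching, this value is also `min-SWGG`.
-/

theorem LinearIndependent.exists_inner_eq {ι E : Type*} [NormedAddCommGroup E]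
    [InnerProductSpace ℝ E] [FiniteDimensional ℝ E] {v : ι → E}
    (hv : LinearIndependent ℝ v) (w : ι → ℝ) : ∃ θ : E, ∀ i, ⟪v i, θ⟫ = w i := by
  let b := Module.Basis.span hv
  obtain ⟨f, hf⟩ := LinearMap.exists_extend (b.constr ℝ w)
  refine ⟨(InnerProductSpace.toDual ℝ E).symm (LinearMap.toContinuousLinearMap f), fun i => ?_⟩
  rw [real_inner_comm, InnerProductSpace.toDual_symm_apply]
  have hfi := LinearMap.congr_fun hf (b i)
  rw [LinearMap.comp_apply, b.constr_basis, Submodule.subtype_apply,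
    Module.Basis.span_apply] at hfi
  exact hfi

theorem AffineIndependent.exists_inner_eq_add_const {ι E : Type*} [NormedAddCommGroup E]
    [InnerProductSpace ℝ E] [FiniteDimensional ℝ E] {p : ι → E}
    (hp : AffineIndependent ℝ p) (w : ι → ℝ) : ∃ (θ : E) (c : ℝ), ∀ i, ⟪p i, θ⟫ = w i + c := by
  rcases isEmpty_or_nonempty ι with hι | ⟨⟨i₀⟩⟩
  · exact ⟨0, 0, isEmptyElim⟩
  obtain ⟨θ, hθ⟩ := ((affineIndependent_iff_linearIndependent_vsub ℝ p i₀).1 hp).exists_inner_eq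
    fun i => w i - w i₀
  refine ⟨θ, ⟪p i₀, θ⟫ - w i₀, fun i => ?_⟩
  by_cases hi : i = i₀
  · subst hi
    ring
  · have := hθ ⟨i, hi⟩
    rw [vsub_eq_sub, inner_sub_left] at this
    linarith

section

variable {n d : ℕ}

theorem IsSorting.smul {θ : EuclideanSpace ℝ (Fin d)} {x : Fin n → EuclideanSpace ℝ (Fin d)}
    {σ : Equiv.Perm (Fin n)} (h : IsSorting θ x σ) {c : ℝ} (hc : 0 ≤ c) :
    IsSorting (c • θ) x σ := by
  intro i j hij
  simp only [real_inner_smul_right]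
  exact mul_le_mul_of_nonneg_left (h hij) hc

theorem SWGG_eq_SWGG_one (x y : Fin n → EuclideanSpace ℝ (Fin d)) (σ τ : Equiv.Perm (Fin n)) :
    SWGG x y σ τ = SWGG x y 1 (τ * σ⁻¹) := by
  simp only [SWGG, Equiv.Perm.one_apply]
  rw [← Equiv.sum_comp σ fun j => ‖x j - y ((τ * σ⁻¹) j)‖ ^ 2]
  simp

theorem wsq_le_SWGG_one (x y : Fin n → EuclideanSpace ℝ (Fin d)) (ρ : Equiv.Perm (Fin n)) :
    Wsq x y ≤ SWGG x y 1 ρ :=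
  mul_le_mul_of_nonneg_left (ciInf_le (Set.finite_range _).bddBelow ρ) (by positivity)

theorem wsq_le_SWGG (x y : Fin n → EuclideanSpace ℝ (Fin d)) (σ τ : Equiv.Perm (Fin n)) :
    Wsq x y ≤ SWGG x y σ τ :=
  SWGG_eq_SWGG_one x y σ τ ▸ wsq_le_SWGG_one x y _

theorem exists_SWGG_one_eq_wsq (x y : Fin n → EuclideanSpace ℝ (Fin d)) :
    ∃ ρ : Equiv.Perm (Fin n), SWGG x y 1 ρ = Wsq x y := by
  obtain ⟨ρ, hρ⟩ := exists_eq_ciInf_of_finite (f := fun ρ : Equiv.Perm (Fin n) =>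
    ∑ i, ‖x i - y (ρ i)‖ ^ 2)
  exact ⟨ρ, by simp [SWGG, Wsq, ← hρ]⟩

theorem minSWGG_eq_wsq_of_exists {x y : Fin n → EuclideanSpace ℝ (Fin d)}
    (h : ∃ (θ : EuclideanSpace ℝ (Fin d)) (σ τ : Equiv.Perm (Fin n)),
      ‖θ‖ = 1 ∧ IsSorting θ x σ ∧ IsSorting θ y τ ∧ SWGG x y σ τ = Wsq x y) :
    minSWGG x y = Wsq x y := by
  refine IsLeast.csInf_eq ⟨?_, ?_⟩
  · obtain ⟨θ, σ, τ, hθ, hσ, hτ, hw⟩ := h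
    exact ⟨θ, σ, τ, hθ, hσ, hτ, hw.symm⟩
  · rintro r ⟨-, σ, τ, -, -, -, rfl⟩
    exact wsq_le_SWGG x y σ τ

theorem exists_isSorting_one_of_affineIndependent (hn : 0 < n)
    {x y : Fin n → EuclideanSpace ℝ (Fin d)} (h : AffineIndependent ℝ (Sum.elim x y))
    (ρ : Equiv.Perm (Fin n)) :
    ∃ θ : EuclideanSpace ℝ (Fin d), ‖θ‖ = 1 ∧ IsSorting θ x 1 ∧ IsSorting θ y ρ := by
  -- The shift by `1` separates `x 0` from `y (ρ 0)` along `θ`, which forces `θ ≠ 0`.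
  obtain ⟨θ, c, hθ⟩ := h.exists_inner_eq_add_const
    (Sum.elim (fun i => (i : ℝ)) fun j => (ρ.symm j : ℝ) + 1)
  have hx : ∀ i, ⟪x i, θ⟫ = i + c := fun i => hθ (Sum.inl i)
  have hy : ∀ i, ⟪y (ρ i), θ⟫ = i + 1 + c := fun i => by simpa using hθ (Sum.inr (ρ i))
  have hθ₀ : θ ≠ 0 := by
    rintro rfl
    have h₁ := hx ⟨0, hn⟩
    have h₂ := hy ⟨0, hn⟩
    simp only [inner_zero_right] at h₁ h₂
    linarith
  refine ⟨‖θ‖⁻¹ • θ, norm_smul_inv_norm hθ₀, IsSorting.smul ?_ (by positivity),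
    IsSorting.smul ?_ (by positivity)⟩
  · intro i j hij
    simp only [Equiv.Perm.one_apply, hx]
    gcongr
    exact hij
  · intro i j hij
    simp only [hy]
    gcongr
    exact hij

end

theorem minSWGG_eq_wsq_of_affineIndependent_general {n d : ℕ} (hn : 1 ≤ n)
    (x y : Fin n → EuclideanSpace ℝ (Fin d))
    (h : AffineIndependent ℝ (Sum.elim x y)) :
    (∃ (θ : EuclideanSpace ℝ (Fin d)) (σ τ : Equiv.Perm (Fin n)),
        ‖θ‖ = 1 ∧ IsSorting θ x σ ∧ IsSorting θ y τ ∧ SWGG x y σ τ = Wsq x y)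
      ∧ minSWGG x y = Wsq x y := by
  obtain ⟨ρ, hρ⟩ := exists_SWGG_one_eq_wsq x y
  obtain ⟨θ, hθ, hx, hy⟩ := exists_isSorting_one_of_affineIndependent hn h ρ
  have hopt : ∃ (θ : EuclideanSpace ℝ (Fin d)) (σ τ : Equiv.Perm (Fin n)),
      ‖θ‖ = 1 ∧ IsSorting θ x σ ∧ IsSorting θ y τ ∧ SWGG x y σ τ = Wsq x y :=
    ⟨θ, 1, ρ, hθ, hx, hy, hρ⟩
  exact ⟨hopt, minSWGG_eq_wsq_of_exists hopt⟩

/-- If the `2n` points `x_1, …, x_n, y_1, …, y_n` are affinely independent, then some unit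
direction `θ` with θ-sorting permutations achieves the Wasserstein distance, so
`min-SWGG(x,y) = W²(x,y)`. -/
theorem minSWGG_eq_wsq_of_affineIndependent {n d : ℕ} (hn : 1 ≤ n) (hd : 1 ≤ d)
    (x y : Fin n → EuclideanSpace ℝ (Fin d))
    (h : AffineIndependent ℝ (Sum.elim x y)) :
    (∃ (θ : EuclideanSpace ℝ (Fin d)) (σ τ : Equiv.Perm (Fin n)),
        ‖θ‖ = 1 ∧ IsSorting θ x σ ∧ IsSorting θ y τ ∧ SWGG x y σ τ = Wsq x y)
      ∧ minSWGG x y = Wsq x y :=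
  minSWGG_eq_wsq_of_affineIndependent_general hn x y h
end

section
/- Fix n ≥ 1, d ≥ 1, a unit vector θ ∈ ℝ^d, a configuration x : Fin n → ℝ^d, and a configuration y : Fin n → ℝ^d supported on the line spanned by θ, i.e. y_i = r_i • θ for some reals r_i. Let x̄ : Fin n → ℝ^d be the orthogonal projection of x onto that line, x̄_i := ⟨x_i, θ⟩ • θ. Then the squared Wasserstein distance splits as W²(x,y) = (1/n) Σ_{i=1}^n ‖x_i − x̄_i‖² + W²(x̄, y). -/
open scoped RealInnerProductSpace

/-- Closed form of the squared Wasserstein distance when the target `y` is supported on the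
line spanned by `θ`: it splits into the projection residual of `x` plus the Wasserstein
distance between the projected configuration and `y`. -/
theorem wsq_eq_residual_add_wsq_proj {n d : ℕ} (hn : 1 ≤ n) (hd : 1 ≤ d)
    (θ : EuclideanSpace ℝ (Fin d)) (hθ : ‖θ‖ = 1)
    (x y : Fin n → EuclideanSpace ℝ (Fin d)) (r : Fin n → ℝ)
    (hy : ∀ i, y i = r i • θ) :
    Wsq x y = (n : ℝ)⁻¹ * ∑ i, ‖x i - ⟪x i, θ⟫ • θ‖ ^ 2
      + Wsq (fun i => ⟪x i, θ⟫ • θ) y := by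
  have hθ2 : ⟪θ, θ⟫ = (1 : ℝ) := by
    rw [real_inner_self_eq_norm_sq, hθ]; norm_num
  -- Pythagoras pointwise
  have key : ∀ (ρ : Equiv.Perm (Fin n)) (i : Fin n),
      ‖x i - y (ρ i)‖ ^ 2
        = ‖x i - ⟪x i, θ⟫ • θ‖ ^ 2 + ‖⟪x i, θ⟫ • θ - y (ρ i)‖ ^ 2 := by
    intro ρ i
    have hdec : x i - y (ρ i)
        = (x i - ⟪x i, θ⟫ • θ) + (⟪x i, θ⟫ • θ - y (ρ i)) := by abel
    have horth : ⟪x i - ⟪x i, θ⟫ • θ, ⟪x i, θ⟫ • θ - y (ρ i)⟫ = (0 : ℝ) := by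
      rw [hy]
      have h1 : ⟪x i - ⟪x i, θ⟫ • θ, θ⟫ = (0 : ℝ) := by
        rw [inner_sub_left, real_inner_smul_left, hθ2]; ring
      have : (⟪x i, θ⟫ • θ - r (ρ i) • θ) = (⟪x i, θ⟫ - r (ρ i)) • θ := by
        rw [sub_smul]
      rw [this, real_inner_smul_right, h1, mul_zero]
    rw [hdec, norm_add_sq_real, horth]
    ring
  have sum_key : ∀ ρ : Equiv.Perm (Fin n),
      ∑ i, ‖x i - y (ρ i)‖ ^ 2
        = (∑ i, ‖x i - ⟪x i, θ⟫ • θ‖ ^ 2) + ∑ i, ‖⟪x i, θ⟫ • θ - y (ρ i)‖ ^ 2 := by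
    intro ρ
    rw [← Finset.sum_add_distrib]
    exact Finset.sum_congr rfl fun i _ => key ρ i
  have hne : Nonempty (Fin n) := Fin.pos_iff_nonempty.mp hn
  have hiInf : (⨅ ρ : Equiv.Perm (Fin n), ∑ i, ‖x i - y (ρ i)‖ ^ 2)
      = (∑ i, ‖x i - ⟪x i, θ⟫ • θ‖ ^ 2)
        + ⨅ ρ : Equiv.Perm (Fin n), ∑ i, ‖⟪x i, θ⟫ • θ - y (ρ i)‖ ^ 2 := by
    have hbdd : BddBelow (Set.range fun ρ : Equiv.Perm (Fin n) =>
        ∑ i, ‖⟪x i, θ⟫ • θ - y (ρ i)‖ ^ 2) :=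
      (Set.finite_range _).bddBelow
    simp only [sum_key]
    exact (add_ciInf hbdd _).symm
  rw [Wsq, Wsq, hiInf, mul_add]
end

section
/- Fix n ≥ 1, d ≥ 1, a unit vector θ ∈ ℝ^d, a configuration x : Fin n → ℝ^d, and a configuration y : Fin n → ℝ^d supported on the line spanned by θ, i.e. y_i = r_i • θ for some reals r_i. Let σ be a permutation such that i ↦ ⟨x_{σ(i)}, θ⟩ is nondecreasing and τ a permutation such that i ↦ r_{τ(i)} is nondecreasing. Then the sorted matching x_{σ(i)} ↦ y_{τ(i)} is an optimal assignment: W²(x,y) = (1/n) Σ_{i=1}^n ‖x_{σ(i)} − y_{τ(i)}‖². -/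
open scoped RealInnerProductSpace

/-- When `y` is supported on the line spanned by `θ`, the sorted matching
`x_{σ(i)} ↦ y_{τ(i)}` (sorting `x` by its projections on `θ` and `y` by the coefficients `r`)
is an optimal assignment realizing the squared Wasserstein distance. -/
theorem wsq_eq_sorted_matching {n d : ℕ} (hn : 1 ≤ n) (hd : 1 ≤ d)
    (θ : EuclideanSpace ℝ (Fin d)) (hθ : ‖θ‖ = 1)
    (x y : Fin n → EuclideanSpace ℝ (Fin d)) (r : Fin n → ℝ)
    (hy : ∀ i, y i = r i • θ)
    (σ τ : Equiv.Perm (Fin n))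
    (hσ : Monotone fun i => ⟪x (σ i), θ⟫)
    (hτ : Monotone fun i => r (τ i)) :
    Wsq x y = (n : ℝ)⁻¹ * ∑ i, ‖x (σ i) - y (τ i)‖ ^ 2 := by
  rw [Wsq]
  classical
  have expand : ∀ (u : EuclideanSpace ℝ (Fin d)) (c : ℝ),
      ‖u - c • θ‖ ^ 2 = ‖u‖ ^ 2 - 2 * (c * ⟪u, θ⟫) + c ^ 2 := by
    intro u c
    rw [@norm_sub_sq_real (EuclideanSpace ℝ (Fin d)) _ _ u (c • θ),
      real_inner_smul_right, norm_smul, hθ, mul_one, Real.norm_eq_abs, sq_abs]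
  have key : ∀ ρ : Equiv.Perm (Fin n),
      ∑ i, ‖x (σ i) - y (τ i)‖ ^ 2 ≤ ∑ i, ‖x i - y (ρ i)‖ ^ 2 := by
    intro ρ
    set π : Equiv.Perm (Fin n) := (σ.trans ρ).trans τ.symm with hπ
    have hmono : Monovary (fun i => ⟪x (σ i), θ⟫) (fun i => r (τ i)) :=
      hσ.monovary hτ
    have rear := hmono.sum_smul_comp_perm_le_sum_smul (σ := π)
    simp only [smul_eq_mul, hπ, Equiv.trans_apply, Equiv.apply_symm_apply] at rear
    have hL : ∑ i, ‖x (σ i) - y (τ i)‖ ^ 2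
        = ∑ i, ‖x (σ i)‖ ^ 2 - 2 * ∑ i, r (τ i) * ⟪x (σ i), θ⟫ + ∑ i, r (τ i) ^ 2 := by
      simp_rw [hy, expand]
      rw [Finset.sum_add_distrib, Finset.sum_sub_distrib, ← Finset.mul_sum]
    have hR : ∑ i, ‖x i - y (ρ i)‖ ^ 2
        = ∑ i, ‖x (σ i)‖ ^ 2 - 2 * ∑ i, r (ρ (σ i)) * ⟪x (σ i), θ⟫ + ∑ i, r (ρ (σ i)) ^ 2 := by
      rw [← Equiv.sum_comp σ (fun i => ‖x i - y (ρ i)‖ ^ 2)]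
      simp_rw [hy, expand]
      rw [Finset.sum_add_distrib, Finset.sum_sub_distrib, ← Finset.mul_sum]
    have hB : ∑ i, r (ρ (σ i)) ^ 2 = ∑ i, r (τ i) ^ 2 :=
      Fintype.sum_equiv π (fun i => r (ρ (σ i)) ^ 2) (fun i => r (τ i) ^ 2)
        (fun i => by simp [hπ])
    have hc1 : ∑ i, r (ρ (σ i)) * ⟪x (σ i), θ⟫
        = ∑ i, ⟪x (σ i), θ⟫ * r (ρ (σ i)) := by
      simp_rw [mul_comm]
    have hc2 : ∑ i, r (τ i) * ⟪x (σ i), θ⟫ = ∑ i, ⟪x (σ i), θ⟫ * r (τ i) := by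
      simp_rw [mul_comm]
    rw [hL, hR, hB, hc1, hc2]
    linarith
  congr 1
  have hbdd : BddBelow (Set.range fun ρ : Equiv.Perm (Fin n) => ∑ i, ‖x i - y (ρ i)‖ ^ 2) :=
    Set.Finite.bddBelow (Set.finite_range _)
  refine le_antisymm ?_ (le_ciInf key)
  have : ∑ i, ‖x (σ i) - y (τ i)‖ ^ 2
      = ∑ i, ‖x i - y ((σ.symm.trans τ) i)‖ ^ 2 := by
    rw [← Equiv.sum_comp σ (fun i => ‖x i - y ((σ.symm.trans τ) i)‖ ^ 2)]
    simp
  rw [this]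
  exact ciInf_le hbdd _
end

section
/- Fix n ≥ 1, d ≥ 1, a unit vector θ ∈ ℝ^d, configurations x, y : Fin n → ℝ^d, and θ-sorting permutations σ for x and τ for y. Write p_i := ⟨x_i, θ⟩ and q_i := ⟨y_i, θ⟩. Define the pivot configuration z : Fin n → ℝ^d by z_i := ((p_{σ(i)} + q_{τ(i)})/2) • θ and the generalized Wasserstein mean g : Fin n → ℝ^d by g_i := (x_{σ(i)} + y_{τ(i)})/2. Then SWGG(x,y,θ;σ,τ) = 2·W²(x,z) + 2·W²(z,y) − 4·W²(g,z), i.e. the permutation-based definition of SWGG coincides with its Wasserstein generalized geodesic formulation. -/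
open scoped RealInnerProductSpace

lemma iInf_perm_eq {n : ℕ} (F : Equiv.Perm (Fin n) → ℝ) (ρ₀ : Equiv.Perm (Fin n))
    (h : ∀ ρ, F ρ₀ ≤ F ρ) : (⨅ ρ, F ρ) = F ρ₀ :=
  le_antisymm (ciInf_le (Set.finite_range F).bddBelow ρ₀) (le_ciInf h)

lemma expand_sum {n d : ℕ} (θ : EuclideanSpace ℝ (Fin d)) (hθ : ‖θ‖ = 1)
    (v : Fin n → EuclideanSpace ℝ (Fin d)) (c : Fin n → ℝ) (ρ : Equiv.Perm (Fin n)) :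
    ∑ i, ‖v i - (c (ρ i)) • θ‖ ^ 2
      = ∑ i, ‖v i‖ ^ 2 + ∑ i, (c i) ^ 2 - 2 * ∑ i, ⟪v i, θ⟫ * c (ρ i) := by
  have h1 : ∀ i, ‖v i - (c (ρ i)) • θ‖ ^ 2
      = ‖v i‖ ^ 2 + (c (ρ i)) ^ 2 - 2 * (⟪v i, θ⟫ * c (ρ i)) := by
    intro i
    rw [norm_sub_sq_real, real_inner_smul_right, norm_smul]
    simp [hθ]
    ring
  rw [Finset.sum_congr rfl fun i _ => h1 i]
  rw [Finset.sum_sub_distrib, Finset.sum_add_distrib, Finset.mul_sum,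
    Equiv.sum_comp ρ (fun i => c i ^ 2)]

/-- Equivalence of the permutation-based definition of `SWGG` with its Wasserstein generalized
geodesic formulation: with pivot `z_i = ((p_{σ(i)}+q_{τ(i)})/2) • θ` on the line and generalized
Wasserstein mean `g_i = (x_{σ(i)}+y_{τ(i)})/2`, one has
`SWGG = 2 W²(x,z) + 2 W²(z,y) − 4 W²(g,z)`. -/
theorem SWGG_eq_generalized_geodesic {n d : ℕ} (hn : 1 ≤ n) (hd : 1 ≤ d)
    (θ : EuclideanSpace ℝ (Fin d)) (hθ : ‖θ‖ = 1)
    (x y : Fin n → EuclideanSpace ℝ (Fin d))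
    (σ τ : Equiv.Perm (Fin n))
    (hσ : IsSorting θ x σ) (hτ : IsSorting θ y τ)
    (z g : Fin n → EuclideanSpace ℝ (Fin d))
    (hz : ∀ i, z i = ((⟪x (σ i), θ⟫ + ⟪y (τ i), θ⟫) / 2) • θ)
    (hg : ∀ i, g i = (2 : ℝ)⁻¹ • (x (σ i) + y (τ i))) :
    SWGG x y σ τ = 2 * Wsq x z + 2 * Wsq z y - 4 * Wsq g z := by
  set m : Fin n → ℝ := fun i => (⟪x (σ i), θ⟫ + ⟪y (τ i), θ⟫) / 2 with hmdef
  have hσ' : Monotone fun i => ⟪x (σ i), θ⟫ := hσ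
  have hτ' : Monotone fun i => ⟪y (τ i), θ⟫ := hτ
  have hm : Monotone m := fun i j h => by
    have := add_le_add (hσ' h) (hτ' h)
    simp only [hmdef]
    linarith
  have hzm : ∀ i, z i = m i • θ := hz
  -- Step A : Wsq x z
  have WA : Wsq x z = (n : ℝ)⁻¹ * ∑ i, ‖x (σ i) - z i‖ ^ 2 := by
    have hF : ∀ ρ : Equiv.Perm (Fin n), ∑ i, ‖x i - z (ρ i)‖ ^ 2
        = ∑ i, ‖x i‖ ^ 2 + ∑ i, (m i) ^ 2 - 2 * ∑ i, ⟪x i, θ⟫ * m (ρ i) := by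
      intro ρ
      calc ∑ i, ‖x i - z (ρ i)‖ ^ 2 = ∑ i, ‖x i - (m (ρ i)) • θ‖ ^ 2 := by
            simp only [hzm]
        _ = _ := expand_sum θ hθ x m ρ
    have hopt : ∀ ρ : Equiv.Perm (Fin n), (∑ i, ‖x i - z (σ⁻¹ i)‖ ^ 2) ≤ ∑ i, ‖x i - z (ρ i)‖ ^ 2 := by
      intro ρ
      rw [hF ρ, hF σ⁻¹]
      have h1 : ∑ i, ⟪x i, θ⟫ * m (ρ i)
          = ∑ i, ⟪x (σ i), θ⟫ * m ((ρ * σ) i) := by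
        rw [← Equiv.sum_comp σ (fun i => ⟪x i, θ⟫ * m (ρ i))]
        simp [Equiv.Perm.mul_apply]
      have h2 : ∑ i, ⟪x i, θ⟫ * m (σ⁻¹ i) = ∑ i, ⟪x (σ i), θ⟫ * m i := by
        rw [← Equiv.sum_comp σ (fun i => ⟪x i, θ⟫ * m (σ⁻¹ i))]
        simp
      have hr : ∑ i, ⟪x (σ i), θ⟫ * m ((ρ * σ) i) ≤ ∑ i, ⟪x (σ i), θ⟫ * m i :=
        (hσ'.monovary hm).sum_mul_comp_perm_le_sum_mul
      rw [h1, h2]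
      linarith
    unfold Wsq
    rw [iInf_perm_eq _ σ⁻¹ hopt]
    congr 1
    rw [← Equiv.sum_comp σ (fun i => ‖x i - z (σ⁻¹ i)‖ ^ 2)]
    simp
  -- Step B : Wsq z y
  have WB : Wsq z y = (n : ℝ)⁻¹ * ∑ i, ‖z i - y (τ i)‖ ^ 2 := by
    have hF : ∀ ρ : Equiv.Perm (Fin n), ∑ i, ‖z i - y (ρ i)‖ ^ 2
        = ∑ i, ‖y i‖ ^ 2 + ∑ i, (m i) ^ 2 - 2 * ∑ i, ⟪y i, θ⟫ * m (ρ⁻¹ i) := by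
      intro ρ
      have e1 : ∑ i, ‖z i - y (ρ i)‖ ^ 2 = ∑ i, ‖y (ρ i) - m i • θ‖ ^ 2 := by
        simp only [hzm, norm_sub_rev]
      have e2 : ∑ i, ‖y (ρ i) - m i • θ‖ ^ 2 = ∑ i, ‖y i - m (ρ⁻¹ i) • θ‖ ^ 2 := by
        rw [← Equiv.sum_comp ρ (fun i => ‖y i - m (ρ⁻¹ i) • θ‖ ^ 2)]
        simp
      rw [e1, e2, expand_sum θ hθ y m ρ⁻¹]
    have hopt : ∀ ρ : Equiv.Perm (Fin n), (∑ i, ‖z i - y (τ i)‖ ^ 2) ≤ ∑ i, ‖z i - y (ρ i)‖ ^ 2 := by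
      intro ρ
      rw [hF ρ, hF τ]
      have h1 : ∑ i, ⟪y i, θ⟫ * m (ρ⁻¹ i)
          = ∑ i, ⟪y (τ i), θ⟫ * m ((ρ⁻¹ * τ) i) := by
        rw [← Equiv.sum_comp τ (fun i => ⟪y i, θ⟫ * m (ρ⁻¹ i))]
        simp [Equiv.Perm.mul_apply]
      have h2 : ∑ i, ⟪y i, θ⟫ * m (τ⁻¹ i) = ∑ i, ⟪y (τ i), θ⟫ * m i := by
        rw [← Equiv.sum_comp τ (fun i => ⟪y i, θ⟫ * m (τ⁻¹ i))]
        simp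
      have hr : ∑ i, ⟪y (τ i), θ⟫ * m ((ρ⁻¹ * τ) i) ≤ ∑ i, ⟪y (τ i), θ⟫ * m i :=
        (hτ'.monovary hm).sum_mul_comp_perm_le_sum_mul
      rw [h1, h2]
      linarith
    unfold Wsq
    rw [iInf_perm_eq _ τ hopt]
  -- Step C : Wsq g z
  have hgm : ∀ i, ⟪g i, θ⟫ = m i := by
    intro i
    rw [hg i, real_inner_smul_left, inner_add_left]
    simp only [hmdef]
    ring
  have WC : Wsq g z = (n : ℝ)⁻¹ * ∑ i, ‖g i - z i‖ ^ 2 := by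
    have hF : ∀ ρ : Equiv.Perm (Fin n), ∑ i, ‖g i - z (ρ i)‖ ^ 2
        = ∑ i, ‖g i‖ ^ 2 + ∑ i, (m i) ^ 2 - 2 * ∑ i, m i * m (ρ i) := by
      intro ρ
      calc ∑ i, ‖g i - z (ρ i)‖ ^ 2 = ∑ i, ‖g i - (m (ρ i)) • θ‖ ^ 2 := by
            simp only [hzm]
        _ = ∑ i, ‖g i‖ ^ 2 + ∑ i, (m i) ^ 2 - 2 * ∑ i, ⟪g i, θ⟫ * m (ρ i) :=
            expand_sum θ hθ g m ρ
        _ = _ := by simp only [hgm]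
    have hopt : ∀ ρ : Equiv.Perm (Fin n), (∑ i, ‖g i - z ((1 : Equiv.Perm (Fin n)) i)‖ ^ 2)
        ≤ ∑ i, ‖g i - z (ρ i)‖ ^ 2 := by
      intro ρ
      rw [hF ρ, hF 1]
      have hr : ∑ i, m i * m (ρ i) ≤ ∑ i, m i * m i :=
        (hm.monovary hm).sum_mul_comp_perm_le_sum_mul
      simp only [Equiv.Perm.one_apply]
      linarith
    unfold Wsq
    rw [iInf_perm_eq _ 1 hopt]
    simp
  -- pointwise identity
  have key : ∀ i, ‖x (σ i) - y (τ i)‖ ^ 2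
      = 2 * ‖x (σ i) - z i‖ ^ 2 + 2 * ‖z i - y (τ i)‖ ^ 2 - 4 * ‖g i - z i‖ ^ 2 := by
    intro i
    rw [hg i]
    set a := x (σ i)
    set b := y (τ i)
    set c := z i
    have h1 := norm_sub_sq_real a b
    have h2 := norm_sub_sq_real a c
    have h3 := norm_sub_sq_real c b
    have h4 := norm_sub_sq_real ((2 : ℝ)⁻¹ • (a + b)) c
    have h5 : ‖(2 : ℝ)⁻¹ • (a + b)‖ ^ 2
        = (4 : ℝ)⁻¹ * (‖a‖ ^ 2 + 2 * ⟪a, b⟫ + ‖b‖ ^ 2) := by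
      rw [norm_smul, mul_pow, norm_add_sq_real, Real.norm_eq_abs,
        abs_of_pos (by norm_num : (0:ℝ) < 2⁻¹)]
      ring
    have h6 : ⟪(2 : ℝ)⁻¹ • (a + b), c⟫ = (2 : ℝ)⁻¹ * (⟪a, c⟫ + ⟪b, c⟫) := by
      rw [real_inner_smul_left, inner_add_left]
    have h7 : ⟪c, b⟫ = ⟪b, c⟫ := real_inner_comm _ _
    rw [h1, h2, h3, h4, h5, h6, h7]
    ring
  rw [WA, WB, WC]
  unfold SWGG
  rw [Finset.sum_congr rfl fun i _ => key i]
  rw [Finset.sum_sub_distrib, Finset.sum_add_distrib, ← Finset.mul_sum, ← Finset.mul_sum,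
    ← Finset.mul_sum]
  ring
end

section
/- Fix n ≥ 1, d ≥ 1, a unit vector θ ∈ ℝ^d, configurations x, y : Fin n → ℝ^d, and θ-sorting permutations σ for x and τ for y. Write p_i := ⟨x_i, θ⟩, q_i := ⟨y_i, θ⟩, and g_i := (x_{σ(i)} + y_{τ(i)})/2. Then SWGG decomposes into three projection residual terms plus a one-dimensional transport term: SWGG(x,y,θ;σ,τ) = (2/n) Σ_i ‖x_i − p_i • θ‖² + (2/n) Σ_i ‖y_i − q_i • θ‖² − (4/n) Σ_i ‖g_i − ⟨g_i, θ⟩ • θ‖² + (1/n) Σ_i (p_{σ(i)} − q_{τ(i)})². -/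
open scoped RealInnerProductSpace

section Aux
variable {E : Type*} [NormedAddCommGroup E] [InnerProductSpace ℝ E]

lemma resid_aux (θ u : E) (hθ : ‖θ‖ = 1) :
    ‖u - ⟪u, θ⟫ • θ‖ ^ 2 = ‖u‖ ^ 2 - ⟪u, θ⟫ ^ 2 := by
  rw [norm_sub_sq_real, real_inner_smul_right, norm_smul]
  simp [hθ, Real.norm_eq_abs, sq_abs]
  ring

lemma key_aux (θ u v : E) (hθ : ‖θ‖ = 1) :
    ‖u - v‖ ^ 2 =
      2 * ‖u - ⟪u, θ⟫ • θ‖ ^ 2 + 2 * ‖v - ⟪v, θ⟫ • θ‖ ^ 2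
      - 4 * ‖(2:ℝ)⁻¹ • (u + v) - ⟪(2:ℝ)⁻¹ • (u + v), θ⟫ • θ‖ ^ 2
      + (⟪u, θ⟫ - ⟪v, θ⟫) ^ 2 := by
  rw [resid_aux θ u hθ, resid_aux θ v hθ, resid_aux θ _ hθ, norm_sub_sq_real]
  rw [norm_smul, mul_pow, norm_add_sq_real, real_inner_smul_left, inner_add_left]
  simp [Real.norm_eq_abs]
  ring

end Aux

/-- Decomposition of `SWGG` into three projection-residual terms and a one-dimensional
transport term. -/
theorem SWGG_decomposition {n d : ℕ} (hn : 1 ≤ n) (hd : 1 ≤ d)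
    (θ : EuclideanSpace ℝ (Fin d)) (hθ : ‖θ‖ = 1)
    (x y : Fin n → EuclideanSpace ℝ (Fin d))
    (σ τ : Equiv.Perm (Fin n))
    (hσ : IsSorting θ x σ) (hτ : IsSorting θ y τ)
    (g : Fin n → EuclideanSpace ℝ (Fin d))
    (hg : ∀ i, g i = (2 : ℝ)⁻¹ • (x (σ i) + y (τ i))) :
    SWGG x y σ τ =
      2 / n * ∑ i, ‖x i - ⟪x i, θ⟫ • θ‖ ^ 2
      + 2 / n * ∑ i, ‖y i - ⟪y i, θ⟫ • θ‖ ^ 2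
      - 4 / n * ∑ i, ‖g i - ⟪g i, θ⟫ • θ‖ ^ 2
      + (n : ℝ)⁻¹ * ∑ i, (⟪x (σ i), θ⟫ - ⟪y (τ i), θ⟫) ^ 2 := by
  have key : ∀ i : Fin n, ‖x (σ i) - y (τ i)‖ ^ 2 =
      2 * ‖x (σ i) - ⟪x (σ i), θ⟫ • θ‖ ^ 2 + 2 * ‖y (τ i) - ⟪y (τ i), θ⟫ • θ‖ ^ 2
      - 4 * ‖g i - ⟪g i, θ⟫ • θ‖ ^ 2 + (⟪x (σ i), θ⟫ - ⟪y (τ i), θ⟫) ^ 2 := by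
    intro i
    rw [hg i]
    exact key_aux θ _ _ hθ
  have hx : ∑ i, ‖x i - ⟪x i, θ⟫ • θ‖ ^ 2 = ∑ i, ‖x (σ i) - ⟪x (σ i), θ⟫ • θ‖ ^ 2 :=
    (Equiv.sum_comp σ (fun j => ‖x j - ⟪x j, θ⟫ • θ‖ ^ 2)).symm
  have hy : ∑ i, ‖y i - ⟪y i, θ⟫ • θ‖ ^ 2 = ∑ i, ‖y (τ i) - ⟪y (τ i), θ⟫ • θ‖ ^ 2 :=
    (Equiv.sum_comp τ (fun j => ‖y j - ⟪y j, θ⟫ • θ‖ ^ 2)).symm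
  rw [SWGG, Finset.sum_congr rfl (fun i _ => key i), hx, hy]
  simp only [Finset.sum_add_distrib, Finset.sum_sub_distrib, ← Finset.mul_sum]
  ring
end

section
/- Fix n ≥ 1, d ≥ 1, a unit vector θ ∈ ℝ^d, configurations x, y : Fin n → ℝ^d, vectors u, v ∈ ℝ^d, and θ-sorting permutations σ for x and τ for y. Then σ is θ-sorting for the translated configuration i ↦ x_i − u and τ is θ-sorting for i ↦ y_i − v, and SWGG((x−u),(y−v),θ;σ,τ) = SWGG(x,y,θ;σ,τ) − 2⟨u − v, m_x − m_y⟩ + ‖u − v‖², where m_x := (1/n) Σ_i x_i and m_y := (1/n) Σ_i y_i are the means of the configurations. -/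
open scoped RealInnerProductSpace

/-- Behavior of `SWGG` under translations: sorting permutations are preserved, and the value
changes exactly like the squared Wasserstein distance. -/
theorem SWGG_translation {n d : ℕ} (hn : 1 ≤ n) (hd : 1 ≤ d)
    (θ : EuclideanSpace ℝ (Fin d)) (hθ : ‖θ‖ = 1)
    (x y : Fin n → EuclideanSpace ℝ (Fin d)) (u v : EuclideanSpace ℝ (Fin d))
    (σ τ : Equiv.Perm (Fin n))
    (hσ : IsSorting θ x σ) (hτ : IsSorting θ y τ) :
    IsSorting θ (fun i => x i - u) σ ∧ IsSorting θ (fun i => y i - v) τ ∧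
    SWGG (fun i => x i - u) (fun i => y i - v) σ τ =
      SWGG x y σ τ
        - 2 * ⟪u - v, (n : ℝ)⁻¹ • ∑ i, x i - (n : ℝ)⁻¹ • ∑ i, y i⟫
        + ‖u - v‖ ^ 2 := by
  have hn0 : (n : ℝ) ≠ 0 := by positivity
  refine ⟨?_, ?_, ?_⟩
  · intro i j hij
    simp only [inner_sub_left]
    exact sub_le_sub_right (hσ hij) _
  · intro i j hij
    simp only [inner_sub_left]
    exact sub_le_sub_right (hτ hij) _
  · unfold SWGG
    have key : ∀ i : Fin n, ‖(x (σ i) - u) - (y (τ i) - v)‖ ^ 2 =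
        ‖x (σ i) - y (τ i)‖ ^ 2 - 2 * ⟪u - v, x (σ i) - y (τ i)⟫ + ‖u - v‖ ^ 2 := by
      intro i
      have : (x (σ i) - u) - (y (τ i) - v) = (x (σ i) - y (τ i)) - (u - v) := by abel
      rw [this, norm_sub_sq_real]
      rw [real_inner_comm]
    simp only [key]
    rw [Finset.sum_add_distrib, Finset.sum_sub_distrib, Finset.sum_const,
      ← Finset.mul_sum, ← inner_sum]
    have hsum : ∑ i : Fin n, (x (σ i) - y (τ i)) = ∑ i, x i - ∑ i, y i := by
      rw [Finset.sum_sub_distrib, Equiv.sum_comp σ x, Equiv.sum_comp τ y]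
    rw [hsum]
    have h2 : ⟪u - v, (n : ℝ)⁻¹ • ∑ i, x i - (n : ℝ)⁻¹ • ∑ i, y i⟫ =
        (n : ℝ)⁻¹ * ⟪u - v, ∑ i, x i - ∑ i, y i⟫ := by
      rw [← smul_sub, real_inner_smul_right]
    rw [h2]
    simp only [Finset.card_univ, Fintype.card_fin, nsmul_eq_mul]
    field_simp
end

section
/- Fix n ≥ 1, d ≥ 1, configurations x, y : Fin n → ℝ^d, and vectors u, v ∈ ℝ^d. Then min-SWGG behaves under translations exactly like the squared Wasserstein distance: min-SWGG((x−u),(y−v)) = min-SWGG(x,y) − 2⟨u − v, m_x − m_y⟩ + ‖u − v‖², where m_x := (1/n) Σ_i x_i and m_y := (1/n) Σ_i y_i. -/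
/-!
Translating `x` by `u` and `y` by `v` does not change the order of the projections `⟨x_i, θ⟩`,
so the admissible triples `(θ, σ, τ)` are the same for both problems. For each of them, expanding
`‖(x_{σ i} - y_{τ i}) - (u - v)‖²` and summing over `i` shows that SWGG changes by the constant
`‖u - v‖² - 2⟨u - v, m_x - m_y⟩`, since `σ` and `τ` permute the summands of `Σ x` and `Σ y`.
Adding a constant commutes with the infimum because the set of values is nonempty (a unit vector
exists as `d ≥ 1`) and bounded below by `0`.
-/

open scoped RealInnerProductSpace

open Finset

theorem sum_norm_sub_sq_real {ι F : Type*} [NormedAddCommGroup F] [InnerProductSpace ℝ F]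
    (s : Finset ι) (a : ι → F) (w : F) :
    ∑ i ∈ s, ‖a i - w‖ ^ 2 = ∑ i ∈ s, ‖a i‖ ^ 2 - 2 * ⟪∑ i ∈ s, a i, w⟫ + #s * ‖w‖ ^ 2 := by
  simp only [norm_sub_sq_real, sum_add_distrib, sum_sub_distrib, sum_inner, mul_sum, sum_const,
    nsmul_eq_mul]

section SWGG

variable {n d : ℕ}

theorem isSorting_sub_const_iff (θ : EuclideanSpace ℝ (Fin d))
    (x : Fin n → EuclideanSpace ℝ (Fin d)) (u : EuclideanSpace ℝ (Fin d))
    (σ : Equiv.Perm (Fin n)) :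
    IsSorting θ (fun i => x i - u) σ ↔ IsSorting θ x σ := by
  simp only [IsSorting, inner_sub_left]
  exact ⟨fun h i j hij => by simpa using h hij, fun h i j hij => by simpa using h hij⟩

theorem exists_isSorting (θ : EuclideanSpace ℝ (Fin d)) (x : Fin n → EuclideanSpace ℝ (Fin d)) :
    ∃ σ, IsSorting θ x σ :=
  ⟨Tuple.sort _, Tuple.monotone_sort fun i => ⟪x i, θ⟫⟩

theorem SWGG_nonneg (x y : Fin n → EuclideanSpace ℝ (Fin d)) (σ τ : Equiv.Perm (Fin n)) :
    0 ≤ SWGG x y σ τ := by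
  unfold SWGG
  positivity

theorem SWGG_sub_const (hn : n ≠ 0) (x y : Fin n → EuclideanSpace ℝ (Fin d))
    (u v : EuclideanSpace ℝ (Fin d)) (σ τ : Equiv.Perm (Fin n)) :
    SWGG (fun i => x i - u) (fun i => y i - v) σ τ =
      SWGG x y σ τ + (‖u - v‖ ^ 2
        - 2 * ⟪u - v, (n : ℝ)⁻¹ • ∑ i, x i - (n : ℝ)⁻¹ • ∑ i, y i⟫) := by
  have hdiff : ∑ i, (x (σ i) - y (τ i)) = ∑ i, x i - ∑ i, y i := by
    rw [sum_sub_distrib, Equiv.sum_comp σ x, Equiv.sum_comp τ y]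
  have hn' : (n : ℝ) ≠ 0 := Nat.cast_ne_zero.mpr hn
  calc SWGG (fun i => x i - u) (fun i => y i - v) σ τ
      = (n : ℝ)⁻¹ * ∑ i, ‖(x (σ i) - y (τ i)) - (u - v)‖ ^ 2 := by
        simp only [SWGG, sub_sub_sub_comm]
    _ = (n : ℝ)⁻¹ * (∑ i, ‖x (σ i) - y (τ i)‖ ^ 2
          - 2 * ⟪∑ i, x i - ∑ i, y i, u - v⟫ + n * ‖u - v‖ ^ 2) := by
        rw [sum_norm_sub_sq_real, hdiff, card_univ, Fintype.card_fin]
    _ = _ := by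
        rw [SWGG, ← smul_sub, real_inner_smul_right, real_inner_comm]
        field_simp
        ring

def swggValues (x y : Fin n → EuclideanSpace ℝ (Fin d)) : Set ℝ :=
  { r : ℝ | ∃ θ : EuclideanSpace ℝ (Fin d), ∃ σ τ : Equiv.Perm (Fin n),
    ‖θ‖ = 1 ∧ IsSorting θ x σ ∧ IsSorting θ y τ ∧ r = SWGG x y σ τ }

theorem minSWGG_eq_sInf_swggValues (x y : Fin n → EuclideanSpace ℝ (Fin d)) :
    minSWGG x y = sInf (swggValues x y) :=
  rfl

theorem swggValues_nonempty (hd : 1 ≤ d) (x y : Fin n → EuclideanSpace ℝ (Fin d)) :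
    (swggValues x y).Nonempty := by
  let θ : EuclideanSpace ℝ (Fin d) := EuclideanSpace.single ⟨0, hd⟩ 1
  obtain ⟨σ, hσ⟩ := exists_isSorting θ x
  obtain ⟨τ, hτ⟩ := exists_isSorting θ y
  exact ⟨_, θ, σ, τ, by simp [θ], hσ, hτ, rfl⟩

theorem swggValues_bddBelow (x y : Fin n → EuclideanSpace ℝ (Fin d)) :
    BddBelow (swggValues x y) := by
  refine ⟨0, ?_⟩
  rintro r ⟨θ, σ, τ, -, -, -, rfl⟩
  exact SWGG_nonneg x y σ τ

theorem swggValues_sub_const (hn : n ≠ 0) (x y : Fin n → EuclideanSpace ℝ (Fin d))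
    (u v : EuclideanSpace ℝ (Fin d)) :
    swggValues (fun i => x i - u) (fun i => y i - v) =
      (· + (‖u - v‖ ^ 2 - 2 * ⟪u - v, (n : ℝ)⁻¹ • ∑ i, x i - (n : ℝ)⁻¹ • ∑ i, y i⟫))
        '' swggValues x y := by
  ext r
  simp only [swggValues, Set.mem_image, Set.mem_ofPred_eq, isSorting_sub_const_iff,
    SWGG_sub_const hn]
  constructor
  · rintro ⟨θ, σ, τ, hθ, hσ, hτ, rfl⟩
    exact ⟨_, ⟨θ, σ, τ, hθ, hσ, hτ, rfl⟩, rfl⟩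
  · rintro ⟨_, ⟨θ, σ, τ, hθ, hσ, hτ, rfl⟩, rfl⟩
    exact ⟨θ, σ, τ, hθ, hσ, hτ, rfl⟩

end SWGG

/-- `min-SWGG` behaves under translations exactly like the squared Wasserstein distance. -/
theorem minSWGG_translation {n d : ℕ} (hn : 1 ≤ n) (hd : 1 ≤ d)
    (x y : Fin n → EuclideanSpace ℝ (Fin d)) (u v : EuclideanSpace ℝ (Fin d)) :
    minSWGG (fun i => x i - u) (fun i => y i - v) =
      minSWGG x y
        - 2 * ⟪u - v, (n : ℝ)⁻¹ • ∑ i, x i - (n : ℝ)⁻¹ • ∑ i, y i⟫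
        + ‖u - v‖ ^ 2 := by
  rw [minSWGG_eq_sInf_swggValues, minSWGG_eq_sInf_swggValues, swggValues_sub_const (by omega)]
  refine ((OrderIso.addRight _).map_csInf' (swggValues_nonempty hd x y)
    (swggValues_bddBelow x y)).symm.trans ?_
  rw [OrderIso.addRight_apply]
  ring
end

section
/- Fix n ≥ 1, d ≥ 1, a unit vector θ ∈ ℝ^d, and configurations x, y : Fin n → ℝ^d such that the projections ⟨x_i, θ⟩ are pairwise distinct and the projections ⟨y_i, θ⟩ are pairwise distinct; let σ, τ be the (unique) θ-sorting permutations for x and y. Let z : Fin n → ℝ be strictly increasing and consider the pivot configuration ν_i := z_i • θ supported on the line spanned by θ. Then: (i) the unique permutation ρ minimizing Σ_i ‖x_{ρ(i)} − ν_i‖² is ρ = σ, and the unique permutation ρ' minimizing Σ_i ‖ν_i − y_{ρ'(i)}‖² is ρ' = τ; (ii) hence the composed assignment obtained by transporting x optimally to ν and then ν optimally to y sends x_{σ(i)} to y_{τ(i)}, and its cost (1/n) Σ_i ‖x_{σ(i)} − y_{τ(i)}‖² does not depend on the choice of the strictly increasing z. In particular, any two pivot measures supported on the line spanned by θ with pairwise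 distinct atoms yield the same ν-based Wasserstein distance between x and y. -/
open scoped RealInnerProductSpace

/-- Strict rearrangement: sorting permutation is the unique maximizer. -/
lemma strict_rearrange {n : ℕ} (z : Fin n → ℝ) (hz : StrictMono z)
    (a : Fin n → ℝ) (ha : Function.Injective a) (σ : Equiv.Perm (Fin n))
    (hσ : Monotone (a ∘ σ)) (ρ : Equiv.Perm (Fin n)) (hρ : ρ ≠ σ) :
    ∑ i, z i * a (ρ i) < ∑ i, z i * a (σ i) := by
  set g : Fin n → ℝ := a ∘ σ with hg_def
  have hg : StrictMono g := by
    intro i j hij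
    exact lt_of_le_of_ne (hσ hij.le) fun e => hij.ne (σ.injective (ha e))
  set π : Equiv.Perm (Fin n) := ρ.trans σ.symm with hπ_def
  have hmono : Monovary z g := fun i j h => (hz.le_iff_le).2 (hg.lt_iff_lt.1 h).le
  have hne : ¬ Monovary z (g ∘ π) := by
    intro hcon
    apply hρ
    have hπ : StrictMono π := by
      intro i j hij
      by_contra hle
      push_neg at hle
      have h2 : π j ≠ π i := fun e => hij.ne' (π.injective e)
      have h3 : π j < π i := lt_of_le_of_ne hle h2
      have := hcon (hg h3)  -- z j ≤ z i
      exact absurd this (not_le.2 (hz hij))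
    have hid : (π : Fin n → Fin n) = id :=
      (@StrictMono.range_inj (Fin n) (Fin n) _ _ (inferInstance : WellFoundedLT (Fin n)) _ _ hπ strictMono_id).1 (by
        simp [Set.range_eq_univ.2 π.surjective, Set.range_id])
    have hπid : π = Equiv.refl (Fin n) := Equiv.ext fun i => congrFun hid i
    apply Equiv.ext
    intro i
    have := congrArg (fun e => σ (e i)) hπid
    simpa [hπ_def] using this
  have key := (hmono.sum_mul_comp_perm_lt_sum_mul_iff (σ := π)).2 hne
  have e1 : ∀ i, g (π i) = a (ρ i) := by intro i; simp [hg_def, hπ_def]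
  calc ∑ i, z i * a (ρ i) = ∑ i, z i * g (π i) := by simp [e1]
    _ < ∑ i, z i * g i := key
    _ = ∑ i, z i * a (σ i) := rfl

/-- Cost expansion for assignment to a collinear pivot. -/
lemma cost_expand {n d : ℕ} (θ : EuclideanSpace ℝ (Fin d)) (hθ : ‖θ‖ = 1)
    (w : Fin n → EuclideanSpace ℝ (Fin d)) (z : Fin n → ℝ) (ρ : Equiv.Perm (Fin n)) :
    ∑ i, ‖w (ρ i) - z i • θ‖ ^ 2
      = (∑ j, ‖w j‖ ^ 2 + ∑ i, (z i) ^ 2) - 2 * ∑ i, z i * ⟪w (ρ i), θ⟫ := by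
  have h : ∀ i, ‖w (ρ i) - z i • θ‖ ^ 2
      = ‖w (ρ i)‖ ^ 2 - 2 * (z i * ⟪w (ρ i), θ⟫) + (z i) ^ 2 := by
    intro i
    rw [@norm_sub_sq_real, real_inner_smul_right, norm_smul]
    simp [hθ, mul_pow, abs_sq]
  simp only [h]
  rw [Finset.sum_add_distrib, Finset.sum_sub_distrib, ← Finset.mul_sum]
  rw [Equiv.sum_comp ρ (fun j => ‖w j‖ ^ 2)]
  ring

/-- Inconsequence of the pivot measure: for a pivot configuration `ν_i = z_i • θ` supported on
the line spanned by `θ` with strictly increasing coefficients, (i) the unique optimal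
assignments from `x` to `ν` and from `ν` to `y` are the sorting permutations `σ` and `τ`, and
(ii) the composed assignment sends `x_{σ(i)}` to `y_{τ(i)}` and its cost is the same for every
such pivot: the ν-based Wasserstein distance does not depend on the choice of `z`. -/
theorem pivot_independence {n d : ℕ} (hn : 1 ≤ n) (hd : 1 ≤ d)
    (θ : EuclideanSpace ℝ (Fin d)) (hθ : ‖θ‖ = 1)
    (x y : Fin n → EuclideanSpace ℝ (Fin d))
    (hx : Function.Injective fun i => ⟪x i, θ⟫)
    (hy : Function.Injective fun i => ⟪y i, θ⟫)
    (σ τ : Equiv.Perm (Fin n))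
    (hσ : IsSorting θ x σ) (hτ : IsSorting θ y τ)
    (z : Fin n → ℝ) (hz : StrictMono z) :
    (∀ ρ : Equiv.Perm (Fin n), ρ ≠ σ →
        ∑ i, ‖x (σ i) - z i • θ‖ ^ 2 < ∑ i, ‖x (ρ i) - z i • θ‖ ^ 2)
    ∧ (∀ ρ' : Equiv.Perm (Fin n), ρ' ≠ τ →
        ∑ i, ‖z i • θ - y (τ i)‖ ^ 2 < ∑ i, ‖z i • θ - y (ρ' i)‖ ^ 2)
    ∧ (∀ z' : Fin n → ℝ, StrictMono z' →
        ∀ σ' τ' : Equiv.Perm (Fin n),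
          (∀ ρ : Equiv.Perm (Fin n),
            ∑ i, ‖x (σ' i) - z' i • θ‖ ^ 2 ≤ ∑ i, ‖x (ρ i) - z' i • θ‖ ^ 2) →
          (∀ ρ : Equiv.Perm (Fin n),
            ∑ i, ‖z' i • θ - y (τ' i)‖ ^ 2 ≤ ∑ i, ‖z' i • θ - y (ρ i)‖ ^ 2) →
          σ' = σ ∧ τ' = τ ∧
            (n : ℝ)⁻¹ * ∑ i, ‖x (σ' i) - y (τ' i)‖ ^ 2
              = (n : ℝ)⁻¹ * ∑ i, ‖x (σ i) - y (τ i)‖ ^ 2) := by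
  have hxcost : ∀ (z' : Fin n → ℝ), StrictMono z' → ∀ ρ : Equiv.Perm (Fin n), ρ ≠ σ →
      ∑ i, ‖x (σ i) - z' i • θ‖ ^ 2 < ∑ i, ‖x (ρ i) - z' i • θ‖ ^ 2 := by
    intro z' hz' ρ hρ
    have h1 := cost_expand θ hθ x z' σ
    have h2 := cost_expand θ hθ x z' ρ
    have h3 := strict_rearrange z' hz' (fun i => ⟪x i, θ⟫) hx σ hσ ρ hρ
    linarith
  have hycost : ∀ (z' : Fin n → ℝ), StrictMono z' → ∀ ρ : Equiv.Perm (Fin n), ρ ≠ τ →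
      ∑ i, ‖z' i • θ - y (τ i)‖ ^ 2 < ∑ i, ‖z' i • θ - y (ρ i)‖ ^ 2 := by
    intro z' hz' ρ hρ
    have h1 := cost_expand θ hθ y z' τ
    have h2 := cost_expand θ hθ y z' ρ
    have h3 := strict_rearrange z' hz' (fun i => ⟪y i, θ⟫) hy τ hτ ρ hρ
    have e : ∀ (j : Fin n) (i : Fin n), ‖z' i • θ - y j‖ = ‖y j - z' i • θ‖ :=
      fun j i => norm_sub_rev _ _
    simp only [e]
    linarith
  refine ⟨hxcost z hz, hycost z hz, ?_⟩
  intro z' hz' σ' τ' hopt1 hopt2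
  have hσ' : σ' = σ := by
    by_contra h
    exact absurd (hopt1 σ) (not_le.2 (hxcost z' hz' σ' h))
  have hτ' : τ' = τ := by
    by_contra h
    exact absurd (hopt2 τ) (not_le.2 (hycost z' hz' τ' h))
  exact ⟨hσ', hτ', by rw [hσ', hτ']⟩
end

section
/- Fix n ≥ 1 and nondecreasing sequences of reals p_1 ≤ … ≤ p_n and q_1 ≤ … ≤ q_n, and set m_i := (p_i + q_i)/2. Then: (i) m is nondecreasing (so the sorted midpoints give the one-dimensional Wasserstein mean of the two empirical measures); (ii) the geodesic midpoint identity holds: 2·W²₁(p,m) + 2·W²₁(m,q) = W²₁(p,q), where W²₁(a,b) := (1/n) · min_{ρ} Σ_{i=1}^n (a_i − b_{ρ(i)})² is the squared 1D Wasserstein distance between the uniform empirical measures on a and b, the minimum taken over all permutations ρ of {1,…,n}. -/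
/-- Squared one-dimensional 2-Wasserstein distance between the uniform empirical measures of
`a` and `b`: `(1/n) · min_ρ Σ_i (a_i − b_{ρ(i)})²`. -/
noncomputable def W1sq {n : ℕ} (a b : Fin n → ℝ) : ℝ :=
  (n : ℝ)⁻¹ * ⨅ ρ : Equiv.Perm (Fin n), ∑ i, (a i - b (ρ i)) ^ 2

/-! Expanding the square, the cost `∑ (aᵢ - b_{σ i})²` of a matching differs from a
`σ`-independent quantity by `-2 ∑ aᵢ b_{σ i}`, so by the rearrangement inequality the sorted
matching is optimal. For sorted data `W²` is therefore the mean squared gap `(1/n) ∑ (aᵢ - bᵢ)²`,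
and the gap from `p` or `q` to the midpoint sequence is half the gap between `p` and `q`. -/

open Finset

section Rearrangement

variable {ι : Type*} [Fintype ι]

lemma sum_sq_sub_comp_perm (a b : ι → ℝ) (σ : Equiv.Perm ι) :
    ∑ i, (a i - b (σ i)) ^ 2 = ∑ i, a i ^ 2 + ∑ i, b i ^ 2 - 2 * ∑ i, a i * b (σ i) := by
  rw [← Equiv.sum_comp σ fun i => b i ^ 2, ← sum_add_distrib, mul_sum, ← sum_sub_distrib]
  exact sum_congr rfl fun i _ => by ring

lemma Monovary.sum_sq_sub_le_sum_sq_sub_comp_perm {a b : ι → ℝ} (hab : Monovary a b)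
    (σ : Equiv.Perm ι) : ∑ i, (a i - b i) ^ 2 ≤ ∑ i, (a i - b (σ i)) ^ 2 := by
  have sorted := sum_sq_sub_comp_perm a b 1
  simp only [Equiv.Perm.one_apply] at sorted
  rw [sum_sq_sub_comp_perm, sorted]
  linarith [hab.sum_mul_comp_perm_le_sum_mul (σ := σ)]

lemma Monovary.iInf_sum_sq_sub_comp_perm {a b : ι → ℝ} (hab : Monovary a b) :
    ⨅ σ : Equiv.Perm ι, ∑ i, (a i - b (σ i)) ^ 2 = ∑ i, (a i - b i) ^ 2 :=
  le_antisymm (ciInf_le (Set.finite_range _).bddBelow 1)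
    (le_ciInf hab.sum_sq_sub_le_sum_sq_sub_comp_perm)

end Rearrangement

lemma W1sq_of_monotone {n : ℕ} {a b : Fin n → ℝ} (ha : Monotone a) (hb : Monotone b) :
    W1sq a b = (n : ℝ)⁻¹ * ∑ i, (a i - b i) ^ 2 := by
  rw [W1sq, (ha.monovary hb).iInf_sum_sq_sub_comp_perm]

theorem wasserstein_mean_midpoint_general {n : ℕ} (p q : Fin n → ℝ)
    (hp : Monotone p) (hq : Monotone q) :
    Monotone (fun i => (p i + q i) / 2) ∧
    2 * W1sq p (fun i => (p i + q i) / 2) + 2 * W1sq (fun i => (p i + q i) / 2) q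
      = W1sq p q := by
  have hm : Monotone fun i => (p i + q i) / 2 := (hp.add hq).div_const two_pos.le
  refine ⟨hm, ?_⟩
  have gap_left : ∀ i, (p i - (p i + q i) / 2) ^ 2 = (p i - q i) ^ 2 / 4 := fun i => by ring
  have gap_right : ∀ i, ((p i + q i) / 2 - q i) ^ 2 = (p i - q i) ^ 2 / 4 := fun i => by ring
  rw [W1sq_of_monotone hp hm, W1sq_of_monotone hm hq, W1sq_of_monotone hp hq]
  simp only [gap_left, gap_right, ← sum_div]
  ring

/-- The sorted midpoints of two nondecreasing sequences form a nondecreasing sequence (the 1D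
Wasserstein mean), and the geodesic midpoint identity
`2 W²(p,m) + 2 W²(m,q) = W²(p,q)` holds. -/
theorem wasserstein_mean_midpoint {n : ℕ} (hn : 1 ≤ n) (p q : Fin n → ℝ)
    (hp : Monotone p) (hq : Monotone q) :
    Monotone (fun i => (p i + q i) / 2) ∧
    2 * W1sq p (fun i => (p i + q i) / 2) + 2 * W1sq (fun i => (p i + q i) / 2) q
      = W1sq p q :=
  wasserstein_mean_midpoint_general p q hp hq
end
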